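/- arXiv:1502.00461 — 3 statements merged into one kernel-verified Lean document; each statement's English description precedes it below -/
import Mathlib

section
/- Let β ∈ O(2) be a rotation of order 3 and let v ∈ ℝ² be a nonzero vector. Then the ℤ-span L' = ⟨v, βv⟩_ℤ is a full-rank lattice in ℝ² invariant under β: v and βv are linearly independent, β(L') = L', and the angle between v and βv is 2π/3, so L' is a hexagonal lattice (its holohedry contains a subgroup isomorphic to the dihedral group D₆ of order 12). -/
open Matrix

section DihedralAux

variable {G : Type*} [Group G]

private lemma aux_pow_mod6 (g : G) (h6 : g ^ 6 = 1) (n : ℕ) : g ^ (n % 6) = g ^ n := by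
  conv_rhs => rw [← Nat.div_add_mod n 6]
  rw [pow_add, pow_mul, h6, one_pow, one_mul]

private def zp6 (g : G) (i : ZMod 6) : G := g ^ i.val

private lemma zp6_add (g : G) (h6 : g ^ 6 = 1) (a b : ZMod 6) :
    zp6 g (a + b) = zp6 g a * zp6 g b := by
  unfold zp6
  rw [← pow_add, ZMod.val_add, aux_pow_mod6 g h6]

private lemma zp6_zero (g : G) : zp6 g 0 = 1 := by simp [zp6]

private lemma zp6_neg (g : G) (h6 : g ^ 6 = 1) (a : ZMod 6) :
    zp6 g (-a) = (zp6 g a)⁻¹ := by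
  rw [eq_inv_iff_mul_eq_one, ← zp6_add g h6, neg_add_cancel, zp6_zero]

private lemma aux_pow_comm_s (g s : G) (hgs : g * s = s * g⁻¹) (k : ℕ) :
    g ^ k * s = s * (g ^ k)⁻¹ := by
  induction k with
  | zero => simp
  | succ n ih =>
      rw [pow_succ, mul_assoc, hgs, ← mul_assoc, ih]
      group

private lemma zp6_comm_s (g s : G) (h6 : g ^ 6 = 1) (hs : s * s = 1)
    (hc : s * g * s = g⁻¹) (a : ZMod 6) :
    zp6 g a * s = s * zp6 g (-a) := by
  have hgs : g * s = s * g⁻¹ := by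
    calc g * s = (s * s) * g * s := by rw [hs, one_mul]
    _ = s * (s * g * s) := by group
    _ = s * g⁻¹ := by rw [hc]
  rw [zp6_neg g h6]
  exact aux_pow_comm_s g s hgs a.val

/-- Homomorphism from the dihedral group of order 12 determined by a "rotation" of order
dividing 6 and a "reflection". -/
private def dihedralHom (g s : G) (h6 : g ^ 6 = 1) (hs : s * s = 1)
    (hc : s * g * s = g⁻¹) : DihedralGroup 6 →* G where
  toFun x := match x with
    | DihedralGroup.r i => zp6 g i
    | DihedralGroup.sr i => s * zp6 g i
  map_one' := by
    show zp6 g 0 = 1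
    exact zp6_zero g
  map_mul' x y := by
    cases x with
    | r i =>
        cases y with
        | r j =>
            show zp6 g (i + j) = zp6 g i * zp6 g j
            exact zp6_add g h6 i j
        | sr j =>
            show s * zp6 g (j - i) = zp6 g i * (s * zp6 g j)
            rw [← mul_assoc, zp6_comm_s g s h6 hs hc, mul_assoc, ← zp6_add g h6]
            ring_nf
    | sr i =>
        cases y with
        | r j =>
            show s * zp6 g (i + j) = (s * zp6 g i) * zp6 g j
            rw [mul_assoc, zp6_add g h6]
        | sr j =>
            show zp6 g (j - i) = (s * zp6 g i) * (s * zp6 g j)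
            rw [mul_assoc, ← mul_assoc (zp6 g i), zp6_comm_s g s h6 hs hc, ← mul_assoc,
              ← mul_assoc, hs, one_mul, ← zp6_add g h6]
            ring_nf

private lemma dihedralHom_r (g s : G) (h6 : g ^ 6 = 1) (hs : s * s = 1)
    (hc : s * g * s = g⁻¹) (i : ZMod 6) :
    dihedralHom g s h6 hs hc (DihedralGroup.r i) = g ^ i.val := rfl

private lemma dihedralHom_sr (g s : G) (h6 : g ^ 6 = 1) (hs : s * s = 1)
    (hc : s * g * s = g⁻¹) (i : ZMod 6) :
    dihedralHom g s h6 hs hc (DihedralGroup.sr i) = s * g ^ i.val := rfl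

end DihedralAux

set_option maxHeartbeats 1600000 in
/-- let `β ∈ O(2)` be a rotation of order 3 and `v ≠ 0` in `ℝ²`. Then `v` and
`βv` are linearly independent, the lattice `L' = ⟨v, βv⟩_ℤ` is invariant under `β`, the
angle between `v` and `βv` is `2π/3` (i.e. `‖βv‖ = ‖v‖` and `⟪v, βv⟫ = -‖v‖²/2`), and `L'`
is a hexagonal lattice: its holohedry contains a subgroup isomorphic to the dihedral group
`D₆` of order 12. -/
theorem statement7 (β : Matrix.orthogonalGroup (Fin 2) ℝ)
    (hdet : ((↑β : Matrix (Fin 2) (Fin 2) ℝ)).det = 1) (h3 : β ^ 3 = 1) (hne : β ≠ 1)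
    (v : EuclideanSpace ℝ (Fin 2)) (hv : v ≠ 0)
    (L' : Set (EuclideanSpace ℝ (Fin 2)))
    (hL' : L' = {p | ∃ a b : ℤ,
      p = a • v + b • (Matrix.toEuclideanLin (↑β : Matrix (Fin 2) (Fin 2) ℝ) v)}) :
    LinearIndependent ℝ ![v, Matrix.toEuclideanLin (↑β : Matrix (Fin 2) (Fin 2) ℝ) v] ∧
    (Matrix.toEuclideanLin (↑β : Matrix (Fin 2) (Fin 2) ℝ)) '' L' = L' ∧
    ‖Matrix.toEuclideanLin (↑β : Matrix (Fin 2) (Fin 2) ℝ) v‖ = ‖v‖ ∧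
    (inner ℝ v (Matrix.toEuclideanLin (↑β : Matrix (Fin 2) (Fin 2) ℝ) v) : ℝ)
      = -(‖v‖ ^ 2) / 2 ∧
    ∃ H : Subgroup (Matrix.orthogonalGroup (Fin 2) ℝ),
      (∀ α ∈ H, (Matrix.toEuclideanLin (↑α : Matrix (Fin 2) (Fin 2) ℝ)) '' L' = L') ∧
      Nonempty (H ≃* DihedralGroup 6) := by
  set B : Matrix (Fin 2) (Fin 2) ℝ := (↑β : Matrix (Fin 2) (Fin 2) ℝ) with hBdef
  set bv : EuclideanSpace ℝ (Fin 2) := Matrix.toEuclideanLin B v with hbvdef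
  -- basic facts on toEuclideanLin
  have hmulT : ∀ (M N : Matrix (Fin 2) (Fin 2) ℝ) (x : EuclideanSpace ℝ (Fin 2)),
      Matrix.toEuclideanLin (M * N) x = Matrix.toEuclideanLin M (Matrix.toEuclideanLin N x) := by
    intro M N x
    apply (WithLp.equiv 2 (Fin 2 → ℝ)).injective
    simp [Matrix.mulVec_mulVec]
  have hT1 : ∀ x : EuclideanSpace ℝ (Fin 2),
      Matrix.toEuclideanLin (1 : Matrix (Fin 2) (Fin 2) ℝ) x = x := by
    intro x
    apply (WithLp.equiv 2 (Fin 2 → ℝ)).injective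
    simp
  have hco : ∀ x y : EuclideanSpace ℝ (Fin 2), x 0 = y 0 → x 1 = y 1 → x = y := by
    intro x y h0 h1
    apply (WithLp.equiv 2 (Fin 2 → ℝ)).injective
    funext i
    fin_cases i <;> assumption
  have hTapply : ∀ (M : Matrix (Fin 2) (Fin 2) ℝ) (x : EuclideanSpace ℝ (Fin 2)) (i : Fin 2),
      Matrix.toEuclideanLin M x i = M i 0 * x 0 + M i 1 * x 1 := by
    intro M x i
    show (M *ᵥ (x : Fin 2 → ℝ)) i = _
    simp [Matrix.mulVec, dotProduct, Fin.sum_univ_two]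
  have hinner_co : ∀ x y : EuclideanSpace ℝ (Fin 2),
      (inner ℝ x y : ℝ) = x 0 * y 0 + x 1 * y 1 := by
    intro x y
    simp [PiLp.inner_apply, Fin.sum_univ_two, mul_comm]
  have hnorm_co : ∀ x : EuclideanSpace ℝ (Fin 2), ‖x‖ ^ 2 = x 0 * x 0 + x 1 * x 1 := by
    intro x
    rw [← real_inner_self_eq_norm_sq]
    exact hinner_co x x
  -- orthogonality facts
  have horth : star B * B = 1 := β.2.1
  have hpres : ∀ (A : Matrix (Fin 2) (Fin 2) ℝ), star A * A = 1 →
      ∀ x y : EuclideanSpace ℝ (Fin 2),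
      (inner ℝ (Matrix.toEuclideanLin A x) (Matrix.toEuclideanLin A y) : ℝ) = inner ℝ x y := by
    intro A hA x y
    have hd : (A *ᵥ (x : Fin 2 → ℝ)) ⬝ᵥ (A *ᵥ (y : Fin 2 → ℝ))
        = (x : Fin 2 → ℝ) ⬝ᵥ (y : Fin 2 → ℝ) := by
      rw [Matrix.dotProduct_mulVec, ← Matrix.mulVec_transpose, Matrix.mulVec_mulVec]
      rw [show Aᵀ * A = 1 from hA, Matrix.one_mulVec, dotProduct_comm]
    have e1 : (inner ℝ (Matrix.toEuclideanLin A x) (Matrix.toEuclideanLin A y) : ℝ)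
        = (A *ᵥ (x : Fin 2 → ℝ)) ⬝ᵥ (A *ᵥ (y : Fin 2 → ℝ)) := by
      rw [hinner_co]
      simp [Matrix.mulVec, dotProduct, Fin.sum_univ_two, hTapply]
    have e2 : (inner ℝ x y : ℝ) = (x : Fin 2 → ℝ) ⬝ᵥ (y : Fin 2 → ℝ) := by
      rw [hinner_co]; simp [dotProduct, Fin.sum_univ_two]
    rw [e1, e2, hd]
  -- matrix algebra
  have hB3 : B ^ 3 = 1 := by
    have := congrArg (Subtype.val) h3
    simpa using this
  have hBne1 : B ≠ 1 := fun h => hne (Subtype.ext h)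
  have hdet2 : B 0 0 * B 1 1 - B 0 1 * B 1 0 = 1 := by
    rw [← Matrix.det_fin_two]; exact hdet
  have hsq : B ^ 2 = (B 0 0 + B 1 1) • B - 1 := by
    ext i j
    fin_cases i <;> fin_cases j <;>
      simp [pow_two, Matrix.mul_apply, Fin.sum_univ_two, Matrix.one_apply] <;>
      first
        | linear_combination hdet2
        | linear_combination -hdet2
        | ring
  have ht : B 0 0 + B 1 1 = -1 := by
    have e1 : (1 : Matrix (Fin 2) (Fin 2) ℝ)
        = ((B 0 0 + B 1 1) * (B 0 0 + B 1 1)) • B - (B 0 0 + B 1 1) • 1 - B := by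
      calc (1 : Matrix (Fin 2) (Fin 2) ℝ) = B ^ 3 := hB3.symm
      _ = B ^ 2 * B := by rw [pow_succ]
      _ = ((B 0 0 + B 1 1) • B - 1) * B := by rw [hsq]
      _ = (B 0 0 + B 1 1) • (B * B) - B := by
          rw [Matrix.sub_mul, Matrix.smul_mul, Matrix.one_mul]
      _ = (B 0 0 + B 1 1) • ((B 0 0 + B 1 1) • B - 1) - B := by
          rw [← pow_two, hsq]
      _ = ((B 0 0 + B 1 1) * (B 0 0 + B 1 1)) • B - (B 0 0 + B 1 1) • 1 - B := by
          rw [smul_sub, smul_smul]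
    have e00 := congrFun (congrFun e1 0) 0
    have e01 := congrFun (congrFun e1 0) 1
    have e10 := congrFun (congrFun e1 1) 0
    have e11 := congrFun (congrFun e1 1) 1
    simp [Matrix.sub_apply, Matrix.smul_apply, Matrix.one_apply, smul_eq_mul]
      at e00 e01 e10 e11
    have hfact : (B 0 0 + B 1 1 + 1) ^ 2 * (B 0 0 + B 1 1 - 2) = 0 := by
      linear_combination -e00 - e11
    rcases mul_eq_zero.1 hfact with h | h
    · have h' : B 0 0 + B 1 1 + 1 = 0 := by
        exact pow_eq_zero_iff (by norm_num : (2:ℕ) ≠ 0) |>.mp h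
      linarith
    · exfalso
      have hd2 : B 1 1 = 2 - B 0 0 := by linarith
      rw [hd2] at e00 e01 e10
      ring_nf at e00 e01 e10
      have ha : B 0 0 = 1 := by linarith
      have hb : B 0 1 = 0 := by linarith
      have hc : B 1 0 = 0 := by linarith
      apply hBne1
      ext i j
      fin_cases i <;> fin_cases j <;> simp [Matrix.one_apply] <;>
        first | linarith | simp_all
  have hB2 : B ^ 2 = -B - 1 := by
    rw [hsq, ht, neg_one_smul]
  -- statement 3
  have hip : (inner ℝ bv bv : ℝ) = inner ℝ v v := hpres B horth v v
  have hnorm : ‖bv‖ = ‖v‖ := by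
    have h2 : ‖bv‖ ^ 2 = ‖v‖ ^ 2 := by
      rw [← real_inner_self_eq_norm_sq, ← real_inner_self_eq_norm_sq]; exact hip
    have := congrArg Real.sqrt h2
    rwa [Real.sqrt_sq (norm_nonneg _), Real.sqrt_sq (norm_nonneg _)] at this
  have hnv : 0 < ‖v‖ := norm_pos_iff.2 hv
  -- β applied to bv
  have hTbv : Matrix.toEuclideanLin B bv = -v - bv := by
    rw [hbvdef, ← hmulT, ← pow_two, hB2]
    simp only [map_sub, map_neg, LinearMap.sub_apply, LinearMap.neg_apply]
    rw [hT1]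
    abel
  -- statement 4
  have hinner : (inner ℝ v bv : ℝ) = -(‖v‖ ^ 2) / 2 := by
    have h1 := hpres B horth v bv
    rw [← hbvdef, hTbv] at h1
    have h2 : (inner ℝ bv (-v - bv) : ℝ) = -(inner ℝ bv v : ℝ) - inner ℝ bv bv := by
      rw [inner_sub_right, inner_neg_right]
    rw [h2] at h1
    have h4 : (inner ℝ bv bv : ℝ) = ‖v‖ ^ 2 := by
      rw [real_inner_self_eq_norm_sq, hnorm]
    have h5 : (inner ℝ bv v : ℝ) = inner ℝ v bv := real_inner_comm _ _
    rw [h4, h5] at h1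
    linarith
  -- linear independence
  have hbvne : bv ≠ 0 := by
    intro h
    rw [h, norm_zero] at hnorm
    linarith
  have hli : LinearIndependent ℝ ![v, bv] := by
    rw [linearIndependent_fin2]
    constructor
    · simpa using hbvne
    · intro a hEq
      simp only [Matrix.cons_val_one, Matrix.head_cons, Matrix.cons_val_zero] at hEq
      have h1 : (inner ℝ v bv : ℝ) = a * ‖v‖ ^ 2 := by
        conv_lhs => rw [← hEq]
        rw [real_inner_smul_left, real_inner_self_eq_norm_sq, hnorm]
      have ha : a = -(1/2 : ℝ) := by
        rw [hinner] at h1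
        have : ‖v‖ ^ 2 > 0 := by positivity
        nlinarith
      have h2 : ‖v‖ = |a| * ‖v‖ := by
        conv_lhs => rw [← hEq]
        rw [norm_smul, Real.norm_eq_abs, hnorm]
      rw [ha] at h2
      rw [abs_of_nonpos (by norm_num)] at h2
      norm_num at h2
      linarith
  -- coordinate identities
  have hv2 : v 0 * v 0 + v 1 * v 1 = ‖v‖ ^ 2 := (hnorm_co v).symm
  have hb2 : bv 0 * bv 0 + bv 1 * bv 1 = ‖v‖ ^ 2 := by
    rw [← hnorm, ← hnorm_co bv]
  have hvb : v 0 * bv 0 + v 1 * bv 1 = -(‖v‖ ^ 2) / 2 := by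
    rw [← hinner_co]; exact hinner
  set c : ℝ := 2 / ‖v‖ ^ 2 with hcdef
  have hk0 : ‖v‖ ^ 2 ≠ 0 := by positivity
  have hc : c * ‖v‖ ^ 2 = 2 := by
    rw [hcdef]; field_simp
  set wf : Fin 2 → ℝ := ![v 0 + bv 0, v 1 + bv 1] with hwfdef
  have hwf0 : wf 0 = v 0 + bv 0 := rfl
  have hwf1 : wf 1 = v 1 + bv 1 := rfl
  have hw : wf 0 * wf 0 + wf 1 * wf 1 = ‖v‖ ^ 2 := by
    rw [hwf0, hwf1]
    linear_combination hv2 + 2 * hvb + hb2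
  set R : Matrix (Fin 2) (Fin 2) ℝ := c • Matrix.vecMulVec wf wf - 1 with hRdef
  have hRe : ∀ i j, R i j = c * (wf i * wf j) - (if i = j then 1 else 0) := by
    intro i j
    rw [hRdef]
    simp [Matrix.sub_apply, Matrix.smul_apply, Matrix.vecMulVec_apply, Matrix.one_apply,
      smul_eq_mul]
  have hRR : R * R = 1 := by
    ext i j
    rw [Matrix.mul_apply, Fin.sum_univ_two, hRe, hRe, hRe, hRe]
    fin_cases i <;> fin_cases j <;>
      norm_num [Matrix.one_apply, Fin.ext_iff] <;>
      first
        | linear_combination (c * c * wf 0 * wf 0) * hw + (c * wf 0 * wf 0) * hc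
        | linear_combination (c * c * wf 0 * wf 1) * hw + (c * wf 0 * wf 1) * hc
        | linear_combination (c * c * wf 1 * wf 1) * hw + (c * wf 1 * wf 1) * hc
  have hRsym : star R = R := by
    ext i j
    rw [Matrix.star_apply, star_trivial, hRe, hRe]
    rcases eq_or_ne i j with h | h
    · subst h; ring
    · rw [if_neg h, if_neg (Ne.symm h)]; ring
  have hRmem : R ∈ Matrix.orthogonalGroup (Fin 2) ℝ := by
    rw [Matrix.mem_orthogonalGroup_iff']
    rw [← Matrix.conjTranspose_eq_transpose_of_trivial, ← Matrix.star_eq_conjTranspose, hRsym, hRR]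
  have hgmem : -B ∈ Matrix.orthogonalGroup (Fin 2) ℝ := by
    rw [Matrix.mem_orthogonalGroup_iff']
    rw [← Matrix.conjTranspose_eq_transpose_of_trivial, ← Matrix.star_eq_conjTranspose, star_neg, neg_mul_neg, horth]
  set g : Matrix.orthogonalGroup (Fin 2) ℝ := ⟨-B, hgmem⟩ with hgdef
  set ρ : Matrix.orthogonalGroup (Fin 2) ℝ := ⟨R, hRmem⟩ with hρdef
  -- actions on basis vectors
  have hTgv : Matrix.toEuclideanLin (-B) v = -bv := by
    rw [map_neg]
    simp [hbvdef]
  have hTgbv : Matrix.toEuclideanLin (-B) bv = v + bv := by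
    rw [map_neg]
    simp only [LinearMap.neg_apply]
    rw [hTbv]
    abel
  have hρv : Matrix.toEuclideanLin R v = bv := by
    have hdwv : wf 0 * v 0 + wf 1 * v 1 = ‖v‖ ^ 2 / 2 := by
      rw [hwf0, hwf1]; linear_combination hv2 + hvb
    apply hco
    · rw [hTapply, hRe, hRe]
      norm_num [Fin.ext_iff]
      linear_combination (c * wf 0) * hdwv + (wf 0 / 2) * hc + hwf0
    · rw [hTapply, hRe, hRe]
      norm_num [Fin.ext_iff]
      linear_combination (c * wf 1) * hdwv + (wf 1 / 2) * hc + hwf1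
  have hρbv : Matrix.toEuclideanLin R bv = v := by
    have hdwb : wf 0 * bv 0 + wf 1 * bv 1 = ‖v‖ ^ 2 / 2 := by
      rw [hwf0, hwf1]; linear_combination hvb + hb2
    apply hco
    · rw [hTapply, hRe, hRe]
      norm_num [Fin.ext_iff]
      linear_combination (c * wf 0) * hdwb + (wf 0 / 2) * hc + hwf0
    · rw [hTapply, hRe, hRe]
      norm_num [Fin.ext_iff]
      linear_combination (c * wf 1) * hdwb + (wf 1 / 2) * hc + hwf1
  -- extensionality via the basis (v, bv)
  have hExt : ∀ γ δ : Matrix.orthogonalGroup (Fin 2) ℝ,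
      Matrix.toEuclideanLin (↑γ : Matrix (Fin 2) (Fin 2) ℝ) v
        = Matrix.toEuclideanLin (↑δ : Matrix (Fin 2) (Fin 2) ℝ) v →
      Matrix.toEuclideanLin (↑γ : Matrix (Fin 2) (Fin 2) ℝ) bv
        = Matrix.toEuclideanLin (↑δ : Matrix (Fin 2) (Fin 2) ℝ) bv → γ = δ := by
    intro γ δ h1 h2
    have hcard : Fintype.card (Fin 2) = Module.finrank ℝ (EuclideanSpace ℝ (Fin 2)) := by
      simp
    let bas := basisOfLinearIndependentOfCardEqFinrank hli hcard
    have hlm : Matrix.toEuclideanLin (↑γ : Matrix (Fin 2) (Fin 2) ℝ)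
        = Matrix.toEuclideanLin (↑δ : Matrix (Fin 2) (Fin 2) ℝ) := by
      apply Module.Basis.ext bas
      intro i
      have hbi : bas i = ![v, bv] i := by
        rw [show bas = basisOfLinearIndependentOfCardEqFinrank hli hcard from rfl,
          coe_basisOfLinearIndependentOfCardEqFinrank]
      rw [hbi]
      fin_cases i
      · simpa using h1
      · simpa using h2
    exact Subtype.ext ((Matrix.toEuclideanLin (𝕜 := ℝ) (m := Fin 2) (n := Fin 2)).injective hlm)
  -- matrix power identities
  have hm2 : (-B) ^ 2 = -B - 1 := by rw [neg_sq, hB2]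
  have hm3 : (-B) ^ 3 = -1 := by
    show (-B) ^ (2 + 1) = -1
    rw [pow_succ, neg_sq, mul_neg]
    have h5 : B ^ 2 * B = 1 := by
      rw [← pow_succ]
      exact hB3
    rw [h5]
  have hm4 : (-B) ^ 4 = B := by
    show (-B) ^ (3 + 1) = B
    rw [pow_succ, hm3]
    simp
  have hm5 : (-B) ^ 5 = 1 + B := by
    show (-B) ^ (4 + 1) = 1 + B
    rw [pow_succ, hm4, mul_neg, ← pow_two, hB2, neg_sub]
    abel
  -- group relations
  have hg6 : g ^ 6 = 1 := by
    apply Subtype.ext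
    have : ((g ^ 6 : Matrix.orthogonalGroup (Fin 2) ℝ) : Matrix (Fin 2) (Fin 2) ℝ)
        = (-B) ^ 6 := by
      rw [SubmonoidClass.coe_pow]
    rw [this]
    show (-B) ^ (3 * 2) = 1
    rw [pow_mul, hm3, neg_one_sq]
  have hρ2 : ρ * ρ = 1 := Subtype.ext hRR
  have hchain : ∀ x : EuclideanSpace ℝ (Fin 2),
      Matrix.toEuclideanLin (R * -B * R * -B) x
        = Matrix.toEuclideanLin R (Matrix.toEuclideanLin (-B)
            (Matrix.toEuclideanLin R (Matrix.toEuclideanLin (-B) x))) := by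
    intro x
    rw [hmulT, hmulT, hmulT]
  have hRn : Matrix.toEuclideanLin R (-bv) = -v := by
    rw [(Matrix.toEuclideanLin R).map_neg, hρbv]
  have hgn : Matrix.toEuclideanLin (-B) (-v) = bv := by
    rw [(Matrix.toEuclideanLin (-B)).map_neg, hTgv, neg_neg]
  have hRw : Matrix.toEuclideanLin R (v + bv) = v + bv := by
    rw [(Matrix.toEuclideanLin R).map_add, hρv, hρbv]
    abel
  have hgw : Matrix.toEuclideanLin (-B) (v + bv) = v := by
    rw [(Matrix.toEuclideanLin (-B)).map_add, hTgv, hTgbv]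
    abel
  have hρgρg : ρ * g * ρ * g = 1 := by
    apply hExt
    · show Matrix.toEuclideanLin (R * -B * R * -B) v = Matrix.toEuclideanLin 1 v
      rw [hchain, hT1, hTgv, hRn, hgn, hρbv]
    · show Matrix.toEuclideanLin (R * -B * R * -B) bv = Matrix.toEuclideanLin 1 bv
      rw [hchain, hT1, hTgbv, hRw, hgw, hρv]
  have hconj : ρ * g * ρ = g⁻¹ := eq_inv_of_mul_eq_one_left hρgρg
  -- the integer-span machinery
  have hcomb : ∀ (f : EuclideanSpace ℝ (Fin 2) →ₗ[ℝ] EuclideanSpace ℝ (Fin 2))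
      (p q r s a b : ℤ), f v = p • v + q • bv → f bv = r • v + s • bv →
      f ((a : ℤ) • v + (b : ℤ) • bv) = (a * p + b * r) • v + (a * q + b * s) • bv := by
    intro f p q r s a b hfv hfb
    rw [map_add, map_zsmul, map_zsmul, hfv, hfb, smul_add, smul_add, smul_smul, smul_smul,
      smul_smul, smul_smul, add_smul, add_smul]
    abel
  let P : Matrix.orthogonalGroup (Fin 2) ℝ → Prop := fun γ =>
    (∃ p q : ℤ, Matrix.toEuclideanLin (↑γ : Matrix (Fin 2) (Fin 2) ℝ) v = p • v + q • bv) ∧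
    (∃ p q : ℤ, Matrix.toEuclideanLin (↑γ : Matrix (Fin 2) (Fin 2) ℝ) bv = p • v + q • bv)
  have hP1 : P 1 := by
    constructor
    · exact ⟨1, 0, by simp [hT1]⟩
    · exact ⟨0, 1, by simp [hT1]⟩
  have hPmul : ∀ γ δ, P γ → P δ → P (γ * δ) := by
    rintro γ δ ⟨⟨p, q, h1⟩, ⟨r, s, h2⟩⟩ ⟨⟨p', q', h3⟩, ⟨r', s', h4⟩⟩
    constructor
    · refine ⟨p' * p + q' * r, p' * q + q' * s, ?_⟩
      rw [MulMemClass.coe_mul, hmulT, h3]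
      exact hcomb _ p q r s p' q' h1 h2
    · refine ⟨r' * p + s' * r, r' * q + s' * s, ?_⟩
      rw [MulMemClass.coe_mul, hmulT, h4]
      exact hcomb _ p q r s r' s' h1 h2
  have hPpow : ∀ γ, P γ → ∀ n : ℕ, P (γ ^ n) := by
    intro γ hγ n
    induction n with
    | zero => simpa [pow_zero] using hP1
    | succ m ih => rw [pow_succ]; exact hPmul _ _ ih hγ
  have hPβ : P β := by
    constructor
    · exact ⟨0, 1, by simp; rfl⟩
    · exact ⟨-1, -1, by rw [hTbv]; simp [neg_smul, sub_eq_add_neg]⟩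
  have hPg : P g := by
    constructor
    · exact ⟨0, -1, by show Matrix.toEuclideanLin (-B) v = _; rw [hTgv]; simp⟩
    · exact ⟨1, 1, by show Matrix.toEuclideanLin (-B) bv = _; rw [hTgbv]; simp⟩
  have hPρ : P ρ := by
    constructor
    · exact ⟨0, 1, by show Matrix.toEuclideanLin R v = _; rw [hρv]; simp⟩
    · exact ⟨1, 0, by show Matrix.toEuclideanLin R bv = _; rw [hρbv]; simp⟩
  have hmem_of : ∀ γ : Matrix.orthogonalGroup (Fin 2) ℝ, P γ → ∀ x ∈ L',
      Matrix.toEuclideanLin (↑γ : Matrix (Fin 2) (Fin 2) ℝ) x ∈ L' := by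
    rintro γ ⟨⟨p, q, h1⟩, ⟨r, s, h2⟩⟩ x hx
    rw [hL'] at hx ⊢
    obtain ⟨a, b, rfl⟩ := hx
    exact ⟨a * p + b * r, a * q + b * s, (hcomb _ p q r s a b h1 h2).symm ▸ rfl⟩
  have hIm : ∀ γ : Matrix.orthogonalGroup (Fin 2) ℝ, P γ → P γ⁻¹ →
      (Matrix.toEuclideanLin (↑γ : Matrix (Fin 2) (Fin 2) ℝ)) '' L' = L' := by
    intro γ h h'
    apply Set.Subset.antisymm
    · rintro x ⟨y, hy, rfl⟩
      exact hmem_of γ h y hy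
    · intro x hx
      refine ⟨Matrix.toEuclideanLin (↑γ⁻¹ : Matrix (Fin 2) (Fin 2) ℝ) x,
        hmem_of γ⁻¹ h' x hx, ?_⟩
      rw [← hmulT]
      have hone : (↑γ : Matrix (Fin 2) (Fin 2) ℝ) * (↑γ⁻¹ : Matrix (Fin 2) (Fin 2) ℝ) = 1 := by
        have h1 : γ * γ⁻¹ = 1 := by group
        have := congrArg Subtype.val h1
        simpa using this
      rw [hone, hT1]
  -- conclusion part 2
  have hβinv : P β⁻¹ := by
    have hβi : β⁻¹ = β * β := by
      apply inv_eq_of_mul_eq_one_right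
      have : β * (β * β) = β ^ 3 := by rw [← mul_assoc, ← pow_two, ← pow_succ]
      rw [this, h3]
    rw [hβi]
    exact hPmul β β hPβ hPβ
  have him2 : (Matrix.toEuclideanLin B) '' L' = L' := hIm β hPβ hβinv
  -- the dihedral subgroup
  let φ : DihedralGroup 6 →* Matrix.orthogonalGroup (Fin 2) ℝ :=
    dihedralHom g ρ hg6 (by exact Subtype.ext hRR) hconj
  have hPφ : ∀ x : DihedralGroup 6, P (φ x) := by
    intro x
    cases x with
    | r i =>
        have : φ (DihedralGroup.r i) = g ^ i.val := rfl
        rw [this]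
        exact hPpow g hPg i.val
    | sr i =>
        have : φ (DihedralGroup.sr i) = ρ * g ^ i.val := rfl
        rw [this]
        exact hPmul ρ (g ^ i.val) hPρ (hPpow g hPg i.val)
  -- injectivity of φ
  have hdetR : R.det = -1 := by
    rw [Matrix.det_fin_two, hRe, hRe, hRe, hRe]
    norm_num [Fin.ext_iff]
    linear_combination (-c) * hw - hc
  have hinj : Function.Injective φ := by
    rw [injective_iff_map_eq_one]
    intro x hx
    cases x with
    | r i =>
        have hxv : g ^ i.val = 1 := hx
        have hcm : (-B) ^ i.val = 1 := by
          have := congrArg Subtype.val hxv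
          rw [SubmonoidClass.coe_pow] at this
          simpa using this
        have hk6 : i.val < 6 := ZMod.val_lt i
        have hk : i.val = 0 ∨ i.val = 1 ∨ i.val = 2 ∨ i.val = 3 ∨ i.val = 4 ∨ i.val = 5 := by
          omega
        rcases hk with hk | hk | hk | hk | hk | hk
        · rw [DihedralGroup.one_def]
          congr 1
          exact (ZMod.val_eq_zero i).mp hk
        · exfalso
          rw [hk, pow_one] at hcm
          have h00 := congrFun (congrFun hcm 0) 0
          have h11 := congrFun (congrFun hcm 1) 1
          simp [Matrix.neg_apply, Matrix.one_apply] at h00 h11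
          linarith
        · exfalso
          rw [hk, hm2] at hcm
          have h00 := congrFun (congrFun hcm 0) 0
          have h11 := congrFun (congrFun hcm 1) 1
          simp [Matrix.sub_apply, Matrix.neg_apply, Matrix.one_apply] at h00 h11
          linarith
        · exfalso
          rw [hk, hm3] at hcm
          have h00 := congrFun (congrFun hcm 0) 0
          simp [Matrix.neg_apply, Matrix.one_apply] at h00
          linarith
        · exfalso
          rw [hk, hm4] at hcm
          exact hBne1 hcm
        · exfalso
          rw [hk, hm5] at hcm
          have h00 := congrFun (congrFun hcm 0) 0
          have h11 := congrFun (congrFun hcm 1) 1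
          simp [Matrix.add_apply, Matrix.one_apply] at h00 h11
          linarith
    | sr i =>
        exfalso
        have hxv : ρ * g ^ i.val = 1 := hx
        have hcm : R * (-B) ^ i.val = 1 := by
          have := congrArg Subtype.val hxv
          rw [Submonoid.coe_mul, SubmonoidClass.coe_pow] at this
          simpa using this
        have hdets := congrArg Matrix.det hcm
        rw [Matrix.det_mul, Matrix.det_pow, Matrix.det_neg, hdet, hdetR, Matrix.det_one]
          at hdets
        norm_num at hdets
  refine ⟨hli, him2, hnorm, hinner, φ.range, ?_, ⟨(MonoidHom.ofInjective hinj).symm⟩⟩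
  rintro α ⟨x, rfl⟩
  refine hIm (φ x) (hPφ x) ?_
  rw [← map_inv]
  exact hPφ x⁻¹
end

section
/- Let α ∈ O(2) have finite order and suppose α preserves a full-rank lattice L ⊂ ℝ² (α(L) = L). Then the order of α belongs to {1, 2, 3, 4, 6} (the crystallographic restriction in dimension 2). -/
open Matrix

/-!
Since `α` maps the lattice `ℤ b₀ + ℤ b₁` onto itself, its matrix in the basis `b` has integer
entries; the trace does not depend on the basis, so `tr α ∈ ℤ`. A reflection (`det α = -1`) is
an involution. A rotation has `tr α = 2 cos θ ∈ {-2, -1, 0, 1, 2}`, and by Cayley–Hamilton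
`α² = tr α • α - 1`, which in each of these five cases forces `α⁴ = 1` or `α⁶ = 1`. So the order
of `α` divides 4 or 6.
-/

theorem LinearMap.trace_mem_range_intCast_of_mem_span {ι S M : Type*} [Fintype ι]
    [DecidableEq ι] [CommRing S] [Nontrivial S] [Module.IsTorsionFree ℤ S] [AddCommGroup M]
    [Module S M] (b : Module.Basis ι S M) (f : M →ₗ[S] M)
    (hf : ∀ i, f (b i) ∈ Submodule.span ℤ (Set.range b)) :
    LinearMap.trace S M f ∈ (Int.castRingHom S).range := by
  rw [LinearMap.trace_eq_matrix_trace S b f, Matrix.trace]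
  refine Subring.sum_mem _ fun i _ => ?_
  rw [Matrix.diag_apply, LinearMap.toMatrix_apply]
  exact (b.mem_span_iff_repr_mem ℤ _).1 (hf i) i

theorem pow_three_eq_one_of_sq_eq_neg_sub_one {R : Type*} [Ring R] {x : R}
    (h : x ^ 2 = -x - 1) : x ^ 3 = 1 := by
  calc x ^ 3 = x * (-x - 1) := by rw [pow_succ', h]
    _ = -x ^ 2 - x := by noncomm_ring
    _ = 1 := by rw [h]; abel

theorem orderOf_mem_of_pow_four_or_pow_six {G : Type*} [Monoid G] {x : G}
    (h : x ^ 4 = 1 ∨ x ^ 6 = 1) : orderOf x ∈ ({1, 2, 3, 4, 6} : Set ℕ) := by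
  have hdiv : orderOf x ∈ Nat.divisors 4 ∪ Nat.divisors 6 := by
    simpa [Nat.mem_divisors, orderOf_dvd_iff_pow_eq_one] using h
  have hdivisors : ∀ n ∈ Nat.divisors 4 ∪ Nat.divisors 6, n ∈ ({1, 2, 3, 4, 6} : Set ℕ) := by
    decide
  exact hdivisors _ hdiv

namespace Matrix

variable {R : Type*} [CommRing R]

theorem sq_eq_trace_smul_sub_det_smul [Nontrivial R] (A : Matrix (Fin 2) (Fin 2) R) :
    A ^ 2 = A.trace • A - A.det • 1 := by
  have h := A.aeval_self_charpoly
  simp only [A.charpoly_fin_two, map_add, map_sub, map_pow, map_mul, Polynomial.aeval_X,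
    Polynomial.aeval_C, Algebra.algebraMap_eq_smul_one, smul_mul_assoc, one_mul] at h
  rw [← sub_eq_zero, ← h]
  abel

attribute [local instance] starRingOfComm

theorem det_eq_one_or_neg_one_of_mem_orthogonalGroup [NoZeroDivisors R] {n : Type*}
    [Fintype n] [DecidableEq n] {A : Matrix n n R} (hA : A ∈ orthogonalGroup n R) :
    A.det = 1 ∨ A.det = -1 :=
  mul_self_eq_one_iff.1 (det_of_mem_unitary hA).2

theorem adjugate_eq_det_smul_transpose {n : Type*} [Fintype n] [DecidableEq n]
    {A : Matrix n n R} (hA : A ∈ orthogonalGroup n R) : adjugate A = A.det • Aᵀ := by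
  calc adjugate A = Aᵀ * A * adjugate A := by rw [(mem_orthogonalGroup_iff' _ _).1 hA, one_mul]
    _ = A.det • Aᵀ := by rw [Matrix.mul_assoc, mul_adjugate, mul_smul_comm, mul_one]

theorem sq_eq_one_of_mem_orthogonalGroup_of_det_eq_neg_one {A : Matrix (Fin 2) (Fin 2) R}
    (hA : A ∈ orthogonalGroup (Fin 2) R) (hdet : A.det = -1) : A ^ 2 = 1 := by
  have hadj := adjugate_eq_det_smul_transpose hA
  rw [hdet, adjugate_fin_two] at hadj
  have hsymm : Aᵀ = A := by
    have h01 := congrFun (congrFun hadj 0) 1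
    simp only [of_apply, cons_val', cons_val_zero, cons_val_one, empty_val', cons_val_fin_one,
      smul_apply, transpose_apply, neg_smul, one_smul, neg_inj] at h01
    ext i j
    fin_cases i <;> fin_cases j <;> simp [h01]
  rw [sq, ← (mem_orthogonalGroup_iff _ _).1 hA, hsymm]

theorem sq_eq_one_of_mem_specialOrthogonalGroup_of_sq_apply_eq_one [NoZeroDivisors R]
    {A : Matrix (Fin 2) (Fin 2) R} (hA : A ∈ specialOrthogonalGroup (Fin 2) R)
    (h : A 0 0 ^ 2 = 1) : A ^ 2 = 1 := by
  obtain ⟨hdiag, hoff, hnorm⟩ := mem_specialOrthogonalGroup_fin_two_iff.1 hA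
  have h01 : A 0 1 = 0 := by simpa [h] using hnorm
  have h10 : A 1 0 = 0 := by simpa [h01] using hoff
  have hscalar : A = A 0 0 • 1 := by
    ext i j
    fin_cases i <;> fin_cases j <;> simp [h01, h10, hdiag]
  rw [hscalar, smul_pow, h, one_smul, one_pow]

variable [LinearOrder R] [IsStrictOrderedRing R]

theorem pow_four_or_pow_six_eq_one_of_mem_specialOrthogonalGroup
    {A : Matrix (Fin 2) (Fin 2) R} (hA : A ∈ specialOrthogonalGroup (Fin 2) R)
    (htr : A.trace ∈ (Int.castRingHom R).range) : A ^ 4 = 1 ∨ A ^ 6 = 1 := by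
  obtain ⟨hdiag, -, hnorm⟩ := mem_specialOrthogonalGroup_fin_two_iff.1 hA
  obtain ⟨t, ht⟩ := htr
  rw [eq_intCast] at ht
  have hsq : A ^ 2 = (t : R) • A - 1 := by
    rw [sq_eq_trace_smul_sub_det_smul, ← ht, (mem_specialOrthogonalGroup_iff.1 hA).2, one_smul]
  have htrace : (t : R) = 2 * A 0 0 := by rw [ht, trace_fin_two, hdiag]; ring
  have ht_sq : t ^ 2 ≤ 4 := by
    have : (t : R) ^ 2 ≤ 4 := by rw [htrace]; nlinarith [sq_nonneg (A 0 1)]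
    exact_mod_cast this
  have ht_ge : -2 ≤ t := by nlinarith
  have ht_le : t ≤ 2 := by nlinarith
  have hscalar (h : A 0 0 ^ 2 = 1) : A ^ 4 = 1 := by
    rw [show 4 = 2 * 2 from rfl, pow_mul,
      sq_eq_one_of_mem_specialOrthogonalGroup_of_sq_apply_eq_one hA h, one_pow]
  interval_cases t
  · exact .inl (hscalar (by push_cast at htrace; nlinarith))
  · have h3 : A ^ 3 = 1 := pow_three_eq_one_of_sq_eq_neg_sub_one (by simpa using hsq)
    exact .inr (by rw [show 6 = 3 * 2 from rfl, pow_mul, h3, one_pow])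
  · have h2 : A ^ 2 = -1 := by simpa using hsq
    exact .inl (by rw [show 4 = 2 * 2 from rfl, pow_mul, h2, neg_one_sq])
  · have h3 : (-A) ^ 3 = 1 := pow_three_eq_one_of_sq_eq_neg_sub_one (by simpa using hsq)
    exact .inr (by rw [← (by decide : Even 6).neg_pow, show 6 = 3 * 2 from rfl, pow_mul, h3,
      one_pow])
  · exact .inl (hscalar (by push_cast at htrace; nlinarith))

theorem pow_four_or_pow_six_eq_one_of_mem_orthogonalGroup {A : Matrix (Fin 2) (Fin 2) R}
    (hA : A ∈ orthogonalGroup (Fin 2) R) (htr : A.trace ∈ (Int.castRingHom R).range) :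
    A ^ 4 = 1 ∨ A ^ 6 = 1 := by
  rcases det_eq_one_or_neg_one_of_mem_orthogonalGroup hA with hdet | hdet
  · exact pow_four_or_pow_six_eq_one_of_mem_specialOrthogonalGroup ⟨hA, hdet⟩ htr
  · left
    rw [show 4 = 2 * 2 from rfl, pow_mul,
      sq_eq_one_of_mem_orthogonalGroup_of_det_eq_neg_one hA hdet, one_pow]

end Matrix

theorem statement12_general (b : Module.Basis (Fin 2) ℝ (Fin 2 → ℝ)) (L : Set (Fin 2 → ℝ))
    (hL : L = (Submodule.span ℤ (Set.range b) : Submodule ℤ (Fin 2 → ℝ)))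
    (α : Matrix.orthogonalGroup (Fin 2) ℝ)
    (hαL : (fun x => (↑α : Matrix (Fin 2) (Fin 2) ℝ) *ᵥ x) '' L = L) :
    orderOf α ∈ ({1, 2, 3, 4, 6} : Set ℕ) := by
  have hb : ∀ i, Matrix.toLin' (α : Matrix (Fin 2) (Fin 2) ℝ) (b i) ∈
      Submodule.span ℤ (Set.range b) := by
    intro i
    have hbi : b i ∈ L := hL ▸ Submodule.subset_span (Set.mem_range_self i)
    rw [← SetLike.mem_coe, ← hL, ← hαL]
    exact ⟨b i, hbi, rfl⟩
  have htr := LinearMap.trace_mem_range_intCast_of_mem_span b _ hb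
  rw [Matrix.trace_toLin'_eq] at htr
  apply orderOf_mem_of_pow_four_or_pow_six
  simpa only [Subtype.ext_iff, SubmonoidClass.coe_pow, OneMemClass.coe_one] using
    Matrix.pow_four_or_pow_six_eq_one_of_mem_orthogonalGroup α.2 htr

/-- crystallographic restriction in dimension 2: if `α ∈ O(2)` has finite
order and preserves a full-rank lattice `L ⊂ ℝ²`, then the order of `α` is 1, 2, 3, 4 or
6. -/
theorem statement12 (b : Module.Basis (Fin 2) ℝ (Fin 2 → ℝ)) (L : Set (Fin 2 → ℝ))
    (hL : L = (Submodule.span ℤ (Set.range b) : Submodule ℤ (Fin 2 → ℝ)))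
    (α : Matrix.orthogonalGroup (Fin 2) ℝ) (hfin : IsOfFinOrder α)
    (hαL : (fun x => (↑α : Matrix (Fin 2) (Fin 2) ℝ) *ᵥ x) '' L = L) :
    orderOf α ∈ ({1, 2, 3, 4, 6} : Set ℕ) :=
  statement12_general b L hL α hαL
end

section
/- Let L ⊂ ℝ^{n+1} be a full-rank lattice and let L̃ = {v ∈ ℝ^n : (v, y) ∈ L for some y ∈ ℝ} be its projection to the first n coordinates. Suppose (0, y₀) ∈ L for some y₀ > 0 and that (0, y₀) is rational with respect to L (i.e., ⟨(0,y₀), l⟩ ∈ ℚ for all l ∈ L). Then for every v ∈ L̃ there exists a nonzero integer q with (qv, 0) ∈ L; consequently L̃ × {0} is rationally compatible with L. -/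
open Matrix

/-
Pairing with `(0, y₀)` reads off `y₀ y` for `(v, y) ∈ L`; since `y₀² = ⟨(0, y₀), (0, y₀)⟩` is
rational too, every last coordinate `y` is a rational multiple `(a / d) y₀`, and then
`d (v, y) - a (0, y₀) = (d v, 0) ∈ L`. The projection of `L` is spanned by the projections of
the `n + 1` basis vectors, so the product of their denominators works for all `v` at once.
-/

theorem Submodule.exists_ne_zero_smul_mem_of_mem_span {R M ι : Type*} [CommRing R] [IsDomain R]
    [AddCommGroup M] [Module R M] [Fintype ι] {N : Submodule R M} {f : ι → M}
    (h : ∀ i, ∃ q : R, q ≠ 0 ∧ q • f i ∈ N) :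
    ∃ r : R, r ≠ 0 ∧ ∀ x ∈ span R (Set.range f), r • x ∈ N := by
  choose q hq0 hqN using h
  refine ⟨∏ i, q i, Finset.prod_ne_zero_iff.2 fun i _ => hq0 i, fun x hx => ?_⟩
  induction hx using Submodule.span_induction with
  | mem x hx =>
    obtain ⟨i, rfl⟩ := hx
    obtain ⟨c, hc⟩ := Finset.dvd_prod_of_mem q (Finset.mem_univ i)
    rw [hc, mul_comm, mul_smul]
    exact N.smul_mem c (hqN i)
  | zero => simp
  | add x y _ _ hx hy => rw [smul_add]; exact N.add_mem hx hy
  | smul a x _ hx => rw [smul_comm]; exact N.smul_mem a hx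

theorem eq_ratCast_div_mul {K : Type*} [Field K] [CharZero K] {x y : K} {q₁ q₂ : ℚ}
    (hx : x ≠ 0) (h₁ : x * y = q₁) (h₂ : x * x = q₂) : y = ((q₁ / q₂ : ℚ) : K) * x := by
  push_cast
  rw [← h₁, ← h₂]
  field_simp

namespace Fin

variable {n : ℕ}

def snocZeroLinearMap (R M : Type*) [Semiring R] [AddCommMonoid M] [Module R M] (n : ℕ) :
    (Fin n → M) →ₗ[R] (Fin (n + 1) → M) where
  toFun v := snoc v 0
  map_add' u v := by
    ext i
    refine lastCases ?_ (fun j => ?_) i <;> simp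
  map_smul' c v := by
    ext i
    refine lastCases ?_ (fun j => ?_) i <;> simp

theorem init_mem_span_range_init {R M ι : Type*} [Semiring R] [AddCommMonoid M] [Module R M]
    {b : ι → Fin (n + 1) → M} {x : Fin (n + 1) → M} (hx : x ∈ Submodule.span R (Set.range b)) :
    init x ∈ Submodule.span R (Set.range fun i => init (b i)) := by
  have := Submodule.mem_map_of_mem (f := LinearMap.funLeft R M castSucc) hx
  rwa [Submodule.map_span, ← Set.range_comp] at this

theorem snoc_zero_dotProduct_snoc (v : Fin n → ℝ) (y₀ y : ℝ) :
    (snoc (0 : Fin n → ℝ) y₀ : Fin (n + 1) → ℝ) ⬝ᵥ snoc v y = y₀ * y := by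
  simp [dotProduct, sum_univ_castSucc]

theorem snoc_den_smul_zero_mem {L : Submodule ℤ (Fin (n + 1) → ℝ)} {v : Fin n → ℝ} {y y₀ : ℝ}
    {s : ℚ} (hvy : snoc v y ∈ L) (h0y : snoc (0 : Fin n → ℝ) y₀ ∈ L) (hs : y = s * y₀) :
    snoc ((s.den : ℝ) • v) 0 ∈ L := by
  have hden : (s.den : ℝ) * y = s.num * y₀ := by
    rw [hs, ← mul_assoc]
    exact_mod_cast congrArg (fun q : ℚ => (q : ℝ) * y₀) s.den_mul_eq_num
  have hcomb : (s.den : ℤ) • (snoc v y : Fin (n + 1) → ℝ) - s.num • snoc (0 : Fin n → ℝ) y₀ =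
      snoc ((s.den : ℝ) • v) 0 := by
    ext i
    refine lastCases ?_ (fun j => ?_) i
    · simp [← Int.cast_smul_eq_zsmul ℝ, hden]
    · simp [← Int.cast_smul_eq_zsmul ℝ]
  rw [← hcomb]
  exact L.sub_mem (L.smul_mem _ hvy) (L.smul_mem _ h0y)

theorem exists_snoc_smul_zero_mem {L : Submodule ℤ (Fin (n + 1) → ℝ)} {y₀ : ℝ} (hy₀ : y₀ ≠ 0)
    (h0y : snoc (0 : Fin n → ℝ) y₀ ∈ L)
    (hrat : ∀ l ∈ L, ∃ q : ℚ, (snoc (0 : Fin n → ℝ) y₀ : Fin (n + 1) → ℝ) ⬝ᵥ l = q)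
    {v : Fin n → ℝ} {y : ℝ} (hvy : snoc v y ∈ L) :
    ∃ q : ℤ, q ≠ 0 ∧ snoc ((q : ℝ) • v) 0 ∈ L := by
  obtain ⟨q₁, hq₁⟩ := hrat _ hvy
  obtain ⟨q₂, hq₂⟩ := hrat _ h0y
  rw [snoc_zero_dotProduct_snoc] at hq₁ hq₂
  refine ⟨((q₁ / q₂).den : ℤ), by exact_mod_cast (q₁ / q₂).den_nz, ?_⟩
  exact_mod_cast snoc_den_smul_zero_mem hvy h0y (eq_ratCast_div_mul hy₀ hq₁ hq₂)

end Fin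

/-- let `L ⊂ ℝ^{n+1}` be a full-rank lattice, `L̃` its coordinate projection
to `ℝ^n`. If `(0, y₀) ∈ L` with `y₀ > 0` and `(0, y₀)` is rational with respect to `L`
(`⟨(0,y₀), l⟩ ∈ ℚ` for all `l ∈ L`), then for every `v ∈ L̃` there is a nonzero integer `q`
with `(qv, 0) ∈ L`; consequently there is a single nonzero integer `r` with `(rv, 0) ∈ L`
for all `v ∈ L̃`, i.e. `L̃ × {0}` is rationally compatible with `L`. -/
theorem statement13 (n : ℕ) (b : Module.Basis (Fin (n + 1)) ℝ (Fin (n + 1) → ℝ))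
    (L : Set (Fin (n + 1) → ℝ))
    (hL : L = (Submodule.span ℤ (Set.range b) : Submodule ℤ (Fin (n + 1) → ℝ)))
    (Lproj : Set (Fin n → ℝ))
    (hproj : Lproj = {v : Fin n → ℝ | ∃ y : ℝ, (Fin.snoc v y : Fin (n + 1) → ℝ) ∈ L})
    (y₀ : ℝ) (hy₀ : 0 < y₀)
    (h0y : (Fin.snoc (0 : Fin n → ℝ) y₀ : Fin (n + 1) → ℝ) ∈ L)
    (hrat : ∀ l ∈ L, ∃ q : ℚ, (Fin.snoc (0 : Fin n → ℝ) y₀ : Fin (n + 1) → ℝ) ⬝ᵥ l = (q : ℝ)) :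
    (∀ v ∈ Lproj, ∃ q : ℤ, q ≠ 0 ∧
      (Fin.snoc ((q : ℝ) • v) (0 : ℝ) : Fin (n + 1) → ℝ) ∈ L) ∧
    ∃ r : ℤ, r ≠ 0 ∧ ∀ v ∈ Lproj,
      (Fin.snoc ((r : ℝ) • v) (0 : ℝ) : Fin (n + 1) → ℝ) ∈ L := by
  subst hL hproj
  have key {v : Fin n → ℝ} {y : ℝ}
      (hvy : (Fin.snoc v y : Fin (n + 1) → ℝ) ∈ Submodule.span ℤ (Set.range b)) :=
    Fin.exists_snoc_smul_zero_mem hy₀.ne' h0y hrat hvy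
  refine ⟨fun v ⟨y, hvy⟩ => key hvy, ?_⟩
  have hgen (i : Fin (n + 1)) : ∃ q : ℤ, q ≠ 0 ∧ q • Fin.init (b i) ∈
      (Submodule.span ℤ (Set.range b)).comap (Fin.snocZeroLinearMap ℤ ℝ n) := by
    have hbi : Fin.snoc (Fin.init (b i)) (b i (Fin.last n)) ∈ Submodule.span ℤ (Set.range b) := by
      rw [Fin.snoc_init_self]
      exact Submodule.subset_span ⟨i, rfl⟩
    obtain ⟨q, hq, hmem⟩ := key hbi
    exact ⟨q, hq, by rwa [← Int.cast_smul_eq_zsmul ℝ]⟩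
  obtain ⟨r, hr, hrN⟩ := Submodule.exists_ne_zero_smul_mem_of_mem_span hgen
  refine ⟨r, hr, fun v ⟨y, hvy⟩ => ?_⟩
  have hv := hrN _ (Fin.init_mem_span_range_init (x := Fin.snoc v y) hvy)
  rwa [Fin.init_snoc, Submodule.mem_comap, ← Int.cast_smul_eq_zsmul ℝ] at hv
end
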